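/- arXiv:2510.24288 — 5 statements merged into one kernel-verified Lean document; each statement's English description precedes it below -/
import Mathlib

section
/- The function Φ(x) := f(x, y*(x)) is differentiable on ℝ^p and its gradient is given by the hypergradient formula ∇Φ(x) = ∇_x f(x, y*(x)) − ∇_x∇_y l(x, y*(x)) · [∇_y∇_y l(x, y*(x))]⁻¹ · ∇_y f(x, y*(x)) for every x ∈ ℝ^p. -/
noncomputable section

open scoped RealInnerProductSpace

/-- Partial gradient in the first (upper-level) variable. -/
noncomputable def gradx {p q : ℕ}
    (f : EuclideanSpace ℝ (Fin p) → EuclideanSpace ℝ (Fin q) → ℝ)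
    (x : EuclideanSpace ℝ (Fin p)) (y : EuclideanSpace ℝ (Fin q)) :
    EuclideanSpace ℝ (Fin p) :=
  gradient (fun x' => f x' y) x

/-- Partial gradient in the second (lower-level) variable. -/
noncomputable def grady {p q : ℕ}
    (f : EuclideanSpace ℝ (Fin p) → EuclideanSpace ℝ (Fin q) → ℝ)
    (x : EuclideanSpace ℝ (Fin p)) (y : EuclideanSpace ℝ (Fin q)) :
    EuclideanSpace ℝ (Fin q) :=
  gradient (fun y' => f x y') y

/-- Mixed second derivative `∇ₓ∇_y l (x,y)`, as a continuous linear map `ℝ^q →L ℝ^p`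
(the adjoint of the derivative in `x` of the partial gradient `∇_y l`). -/
noncomputable def hessxy {p q : ℕ}
    (l : EuclideanSpace ℝ (Fin p) → EuclideanSpace ℝ (Fin q) → ℝ)
    (x : EuclideanSpace ℝ (Fin p)) (y : EuclideanSpace ℝ (Fin q)) :
    EuclideanSpace ℝ (Fin q) →L[ℝ] EuclideanSpace ℝ (Fin p) :=
  ContinuousLinearMap.adjoint (fderiv ℝ (fun x' => grady l x' y) x)

/-- Second derivative `∇_y∇_y l (x,y)` in the lower-level variable, as a continuous linear
map `ℝ^q →L ℝ^q`. -/
noncomputable def hessyy {p q : ℕ}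
    (l : EuclideanSpace ℝ (Fin p) → EuclideanSpace ℝ (Fin q) → ℝ)
    (x : EuclideanSpace ℝ (Fin p)) (y : EuclideanSpace ℝ (Fin q)) :
    EuclideanSpace ℝ (Fin q) →L[ℝ] EuclideanSpace ℝ (Fin q) :=
  fderiv ℝ (fun y' => grady l x y') y

/-- Hypergradient surrogate `∇̄f(x,y,v) = ∇ₓ f(x,y) − ∇ₓ∇_y l(x,y) v`. -/
noncomputable def barGradF {p q : ℕ}
    (f l : EuclideanSpace ℝ (Fin p) → EuclideanSpace ℝ (Fin q) → ℝ)
    (x : EuclideanSpace ℝ (Fin p)) (y v : EuclideanSpace ℝ (Fin q)) :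
    EuclideanSpace ℝ (Fin p) :=
  gradx f x y - hessxy l x y v

/-- Gradient of the auxiliary quadratic objective:
`∇_v r(x,y,v) = ∇_y∇_y l(x,y) v − ∇_y f(x,y)`. -/
noncomputable def gradvR {p q : ℕ}
    (f l : EuclideanSpace ℝ (Fin p) → EuclideanSpace ℝ (Fin q) → ℝ)
    (x : EuclideanSpace ℝ (Fin p)) (y v : EuclideanSpace ℝ (Fin q)) :
    EuclideanSpace ℝ (Fin q) :=
  hessyy l x y v - grady f x y


/-!
Write `G x y = ∇_y l (x, y)`. First-order optimality gives `G x (y* x) = 0` for every `x`.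
Strong convexity makes each `G x` strongly monotone: hence injective, and with coercive
derivative `∇_y∇_y l`, which is therefore invertible (and self-adjoint, being a Hessian). The
implicit function theorem applies to `G`, and injectivity of `G x` identifies `y*` with the
implicit function, so `Dy* = -[∇_y∇_y l]⁻¹ ∂_x G`. The chain rule for `f (x, y* x)` and one
adjoint then give the formula.
-/

open Filter ContinuousLinearMap
open scoped Gradient

section StronglyMonotone

variable {V : Type*} [NormedAddCommGroup V] [InnerProductSpace ℝ V]

def StronglyMonotone (μ : ℝ) (g : V → V) : Prop :=
  ∀ a b, μ * ‖a - b‖ ^ 2 ≤ ⟪g a - g b, a - b⟫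

theorem StronglyMonotone.injective {μ : ℝ} {g : V → V} (hg : StronglyMonotone μ g)
    (hμ : 0 < μ) : Function.Injective g := by
  intro a b hab
  have h := hg a b
  rw [hab, sub_self, inner_zero_left] at h
  have : ‖a - b‖ ^ 2 ≤ 0 := nonpos_of_mul_nonpos_right h hμ
  simpa [sub_eq_zero] using this

theorem StronglyMonotone.mul_norm_sq_le_inner_of_hasFDerivAt {μ : ℝ} {g : V → V}
    {D : V →L[ℝ] V} {y : V} (hg : StronglyMonotone μ g) (hD : HasFDerivAt g D y) (v : V) :
    μ * ‖v‖ ^ 2 ≤ ⟪D v, v⟫ := by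
  have hline : HasDerivAt (fun t : ℝ => ⟪g (y + t • v), v⟫) ⟪D v, v⟫ 0 := by
    have hc : HasDerivAt (fun t : ℝ => y + t • v) v 0 := by
      simpa using ((hasDerivAt_id (0 : ℝ)).smul_const v).const_add y
    simpa using (hD.comp_hasDerivAt_of_eq 0 hc (by simp)).inner ℝ (hasDerivAt_const 0 v)
  refine ge_of_tendsto hline.tendsto_slope_zero_right ?_
  filter_upwards [self_mem_nhdsWithin] with t (ht : 0 < t)
  have h := hg (y + t • v) y
  rw [add_sub_cancel_left, inner_smul_right, norm_smul, mul_pow, Real.norm_eq_abs, sq_abs,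
    inner_sub_left] at h
  simp only [zero_add, zero_smul, add_zero, smul_eq_mul]
  rw [le_inv_mul_iff₀ ht]
  nlinarith

theorem ContinuousLinearMap.isUnit_of_mul_norm_sq_le_inner [CompleteSpace V] {T : V →L[ℝ] V}
    {μ : ℝ} (hμ : 0 < μ) (hT : ∀ v, μ * ‖v‖ ^ 2 ≤ ⟪T v, v⟫) : IsUnit T :=
  T.isUnit_of_forall_le_norm_inner_map (c := ⟨μ, hμ.le⟩) hμ fun v =>
    (mul_comm _ _).trans_le ((hT v).trans (Real.le_norm_self _))

theorem ConvexOn.fderiv_le_fderiv {h : V → ℝ} (hc : ConvexOn ℝ Set.univ h)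
    (hd : Differentiable ℝ h) (a b : V) : fderiv ℝ h b (a - b) ≤ fderiv ℝ h a (a - b) := by
  have hline : ∀ t : ℝ, HasDerivAt (h ∘ AffineMap.lineMap b a)
      (fderiv ℝ h (AffineMap.lineMap b a t) (a - b)) t := fun t =>
    (hd _).hasFDerivAt.comp_hasDerivAt t AffineMap.hasDerivAt_lineMap
  have hmono := (by simpa using hc.comp_affineMap (AffineMap.lineMap b a) :
      ConvexOn ℝ Set.univ (h ∘ AffineMap.lineMap b a)).monotoneOn_deriv
    (fun t _ => (hline t).differentiableAt)
  simpa [(hline 0).deriv, (hline 1).deriv] using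
    hmono (Set.mem_univ 0) (Set.mem_univ 1) zero_le_one

theorem StrongConvexOn.stronglyMonotone_gradient [CompleteSpace V] {f : V → ℝ} {μ : ℝ}
    (hf : StrongConvexOn Set.univ μ f) (hd : Differentiable ℝ f) :
    StronglyMonotone μ (∇ f) := by
  intro a b
  have hD : ∀ y, HasFDerivAt (fun y => f y - μ / 2 * ‖y‖ ^ 2)
      (fderiv ℝ f y - (μ / 2) • (2 • innerSL ℝ y)) y := fun y =>
    (hd y).hasFDerivAt.sub ((hasStrictFDerivAt_norm_sq y).hasFDerivAt.const_mul (μ / 2))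
  have key := (strongConvexOn_iff_convex.mp hf).fderiv_le_fderiv
    (fun y => (hD y).differentiableAt) a b
  rw [(hD a).fderiv, (hD b).fderiv] at key
  simp only [sub_apply, smul_apply, innerSL_apply_apply, smul_eq_mul, nsmul_eq_mul] at key
  rw [inner_sub_left, gradient, gradient, InnerProductSpace.toDual_symm_apply,
    InnerProductSpace.toDual_symm_apply, ← real_inner_self_eq_norm_sq, inner_sub_left a]
  linarith

end StronglyMonotone

section Gradient

variable {V W : Type*} [NormedAddCommGroup V] [InnerProductSpace ℝ V]
  [NormedAddCommGroup W] [InnerProductSpace ℝ W] [CompleteSpace W]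

theorem IsLocalMin.gradient_eq_zero {g : W → ℝ} {a : W} (h : IsLocalMin g a) : ∇ g a = 0 := by
  simp [gradient, h.fderiv_eq_zero]

theorem isSelfAdjoint_fderiv_gradient {g : W → ℝ} {y : W} (hg : ContDiffAt ℝ 2 g y) :
    IsSelfAdjoint (fderiv ℝ (∇ g) y) := by
  have hD := (InnerProductSpace.toDual ℝ W).symm.comp_fderiv (f := fderiv ℝ g) (x := y)
  rw [isSelfAdjoint_iff_isSymmetric]
  intro u w
  change ⟪fderiv ℝ (_ ∘ fderiv ℝ g) y u, w⟫ = ⟪u, fderiv ℝ (_ ∘ fderiv ℝ g) y w⟫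
  rw [hD, real_inner_comm _ u]
  simp only [coe_comp, Function.comp_apply, ContinuousLinearEquiv.coe_coe,
    LinearIsometryEquiv.coe_toContinuousLinearEquiv]
  rw [InnerProductSpace.toDual_symm_apply, InnerProductSpace.toDual_symm_apply]
  exact hg.isSymmSndFDerivAt (by simp) u w

protected theorem ContDiff.gradient {E : Type*} [NormedAddCommGroup E] [NormedSpace ℝ E]
    {f : E → W → ℝ} {g : E → W} {m n : WithTop ℕ∞}
    (hf : ContDiff ℝ m (Function.uncurry f)) (hg : ContDiff ℝ n g) (hnm : n + 1 ≤ m) :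
    ContDiff ℝ n fun x => ∇ (f x) (g x) :=
  (InnerProductSpace.toDual ℝ W).symm.contDiff.comp (hf.fderiv hg hnm)

theorem DifferentiableAt.hasGradientAt_comp_prodMk [CompleteSpace V] {f : V → W → ℝ}
    {φ : V → W} {T : V →L[ℝ] W} {x : V}
    (hf : DifferentiableAt ℝ (fun z : V × W => f z.1 z.2) (x, φ x)) (hφ : HasFDerivAt φ T x) :
    HasGradientAt (fun x' => f x' (φ x'))
      (∇ (fun x' => f x' (φ x)) x + adjoint T (∇ (f x) (φ x))) x := by
  obtain ⟨D, hD⟩ : ∃ D, HasFDerivAt (fun z : V × W => f z.1 z.2) D (x, φ x) :=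
    ⟨_, hf.hasFDerivAt⟩
  have hfst : fderiv ℝ (fun x' => f x' (φ x)) x = D ∘L inl ℝ V W :=
    (HasFDerivAt.comp (𝕜 := ℝ) x hD (hasFDerivAt_prodMk_left x (φ x)) :).fderiv
  have hsnd : fderiv ℝ (f x) (φ x) = D ∘L inr ℝ V W :=
    (HasFDerivAt.comp (𝕜 := ℝ) (φ x) hD (hasFDerivAt_prodMk_right x (φ x)) :).fderiv
  rw [hasGradientAt_iff_hasFDerivAt]
  refine (HasFDerivAt.comp (𝕜 := ℝ) x hD ((hasFDerivAt_id x).prodMk hφ)).congr_fderiv ?_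
  ext u
  simp only [InnerProductSpace.toDual_apply_apply, inner_add_left, adjoint_inner_left, gradient,
    InnerProductSpace.toDual_symm_apply, hfst, hsnd, coe_comp, Function.comp_apply, prod_apply,
    coe_id', id_eq, inl_apply, inr_apply]
  rw [← map_add, Prod.mk_add_mk, add_zero, zero_add]

end Gradient

theorem HasStrictFDerivAt.hasStrictFDerivAt_of_forall_apply_eq {𝕜 : Type*}
    [NontriviallyNormedField 𝕜] {E₁ E₂ F : Type*}
    [NormedAddCommGroup E₁] [NormedSpace 𝕜 E₁] [CompleteSpace E₁]
    [NormedAddCommGroup E₂] [NormedSpace 𝕜 E₂] [CompleteSpace E₂]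
    [NormedAddCommGroup F] [NormedSpace 𝕜 F] [CompleteSpace F]
    {f : E₁ × E₂ → F} {f' : E₁ × E₂ →L[𝕜] F} {φ : E₁ → E₂} {x : E₁}
    (hf : HasStrictFDerivAt f f' (x, φ x)) (hf₂ : (f' ∘L inr 𝕜 E₁ E₂).IsInvertible)
    (hφ : ∀ x', f (x', φ x') = f (x, φ x))
    (hinj : ∀ x', Function.Injective fun y => f (x', y)) :
    HasStrictFDerivAt φ (-(f' ∘L inr 𝕜 E₁ E₂).inverse ∘L (f' ∘L inl 𝕜 E₁ E₂)) x := by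
  refine (hf.hasStrictFDerivAt_implicitFunctionOfProdDomain hf₂).congr_of_eventuallyEq ?_
  filter_upwards [hf.eventually_apply_implicitFunctionOfProdDomain hf₂] with x' hx'
  exact hinj x' (hx'.trans (hφ x').symm)

theorem hasStrictFDerivAt_of_grady_eq_zero {p q : ℕ}
    {l : EuclideanSpace ℝ (Fin p) → EuclideanSpace ℝ (Fin q) → ℝ} {μ : ℝ} (hμ : 0 < μ)
    (hl : ContDiff ℝ 2 fun z : EuclideanSpace ℝ (Fin p) × EuclideanSpace ℝ (Fin q) =>
      l z.1 z.2)
    (hmono : ∀ x, StronglyMonotone μ (grady l x))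
    {ystar : EuclideanSpace ℝ (Fin p) → EuclideanSpace ℝ (Fin q)}
    (hzero : ∀ x, grady l x (ystar x) = 0) (x : EuclideanSpace ℝ (Fin p)) :
    HasStrictFDerivAt ystar
      (-Ring.inverse (hessyy l x (ystar x)) ∘L fderiv ℝ (fun x' => grady l x' (ystar x)) x) x := by
  have hG : ContDiff ℝ 1 fun z : EuclideanSpace ℝ (Fin p) × EuclideanSpace ℝ (Fin q) =>
      grady l z.1 z.2 :=
    ContDiff.gradient (f := fun z : EuclideanSpace ℝ (Fin p) × EuclideanSpace ℝ (Fin q) => l z.1)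
      (hl.comp (contDiff_fst.fst.prodMk contDiff_snd)) contDiff_snd (by norm_num)
  obtain ⟨DG, hDG⟩ :
      ∃ DG, HasStrictFDerivAt (fun z : _ × _ => grady l z.1 z.2) DG (x, ystar x) :=
    ⟨_, hG.contDiffAt.hasStrictFDerivAt one_ne_zero⟩
  have hH : HasFDerivAt (grady l x) (DG ∘L inr ℝ _ _) (ystar x) :=
    HasFDerivAt.comp (𝕜 := ℝ) (ystar x) hDG.hasFDerivAt (hasFDerivAt_prodMk_right x (ystar x))
  have hB : HasFDerivAt (fun x' => grady l x' (ystar x)) (DG ∘L inl ℝ _ _) x :=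
    (HasFDerivAt.comp (𝕜 := ℝ) x hDG.hasFDerivAt (hasFDerivAt_prodMk_left x (ystar x)) :)
  have hHess : hessyy l x (ystar x) = DG ∘L inr ℝ _ _ := hH.fderiv
  have hunit : IsUnit (hessyy l x (ystar x)) := isUnit_of_mul_norm_sq_le_inner hμ
    (hHess ▸ (hmono x).mul_norm_sq_le_inner_of_hasFDerivAt hH)
  have hderiv := hDG.hasStrictFDerivAt_of_forall_apply_eq
    (hHess ▸ ⟨.unitsEquiv ℝ _ hunit.unit, rfl⟩)
    (fun x' => (hzero x').trans (hzero x).symm) (fun x' => (hmono x').injective hμ)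
  rwa [← hHess, ← ringInverse_eq_inverse, ← hB.fderiv] at hderiv

theorem hypergradient_formula_general
    {p q : ℕ} (f l : EuclideanSpace ℝ (Fin p) → EuclideanSpace ℝ (Fin q) → ℝ)
    (μ : ℝ) (hμ : 0 < μ)
    (hfC2 : ContDiff ℝ 2 (fun pr : EuclideanSpace ℝ (Fin p) × EuclideanSpace ℝ (Fin q) =>
      f pr.1 pr.2))
    (hlC2 : ContDiff ℝ 2 (fun pr : EuclideanSpace ℝ (Fin p) × EuclideanSpace ℝ (Fin q) =>
      l pr.1 pr.2))
    (hsc : ∀ x, StrongConvexOn Set.univ μ (l x))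
    (ystar : EuclideanSpace ℝ (Fin p) → EuclideanSpace ℝ (Fin q))
    (hystar : ∀ x y, y ≠ ystar x → l x (ystar x) < l x y) :
    ∀ x, HasGradientAt (fun x' => f x' (ystar x'))
      (gradx f x (ystar x) -
        hessxy l x (ystar x)
          (Ring.inverse (hessyy l x (ystar x)) (grady f x (ystar x)))) x := by
  intro x
  have hl : ∀ x, ContDiff ℝ 2 (l x) := fun x => hlC2.comp (contDiff_const.prodMk contDiff_id)
  have hmono : ∀ x, StronglyMonotone μ (grady l x) := fun x =>
    (hsc x).stronglyMonotone_gradient ((hl x).differentiable (by norm_num))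
  have hzero : ∀ x, grady l x (ystar x) = 0 := fun x =>
    IsLocalMin.gradient_eq_zero <| Eventually.of_forall fun y => by
      rcases eq_or_ne y (ystar x) with rfl | hy
      exacts [le_rfl, (hystar x y hy).le]
  have hsymm : IsSelfAdjoint (Ring.inverse (hessyy l x (ystar x))) :=
    (isSelfAdjoint_fderiv_gradient (hl x).contDiffAt).ringInverse
  convert ((hfC2.differentiable (by norm_num)) (x, ystar x)).hasGradientAt_comp_prodMk
    (hasStrictFDerivAt_of_grady_eq_zero hμ hlC2 hmono hzero x).hasFDerivAt using 1
  simp only [gradx, grady, hessxy, sub_eq_add_neg, adjoint_comp, hsymm.adjoint_eq, map_neg,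
    neg_apply, comp_apply]

/-- **Hypergradient formula (eq. 2)**: under the nonconvex–strongly-convex bilevel
assumptions, `Φ(x) := f(x, y*(x))` is differentiable with
`∇Φ(x) = ∇ₓ f(x,y*(x)) − ∇ₓ∇_y l(x,y*(x)) [∇_y∇_y l(x,y*(x))]⁻¹ ∇_y f(x,y*(x))`. -/
theorem hypergradient_formula
    {p q : ℕ} (f l : EuclideanSpace ℝ (Fin p) → EuclideanSpace ℝ (Fin q) → ℝ)
    (μ Lf1 Ll2 Cfx Cfy Clxy Clyy : ℝ) (hμ : 0 < μ)
    (hfC2 : ContDiff ℝ 2 (fun pr : EuclideanSpace ℝ (Fin p) × EuclideanSpace ℝ (Fin q) =>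
      f pr.1 pr.2))
    (hlC2 : ContDiff ℝ 2 (fun pr : EuclideanSpace ℝ (Fin p) × EuclideanSpace ℝ (Fin q) =>
      l pr.1 pr.2))
    (hsc : ∀ x, StrongConvexOn Set.univ μ (l x))
    (hLfx : ∀ x₁ y₁ x₂ y₂, ‖gradx f x₁ y₁ - gradx f x₂ y₂‖ ≤ Lf1 * (‖x₁ - x₂‖ + ‖y₁ - y₂‖))
    (hLfy : ∀ x₁ y₁ x₂ y₂, ‖grady f x₁ y₁ - grady f x₂ y₂‖ ≤ Lf1 * (‖x₁ - x₂‖ + ‖y₁ - y₂‖))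
    (hLxy : ∀ x₁ y₁ x₂ y₂, ‖hessxy l x₁ y₁ - hessxy l x₂ y₂‖ ≤ Ll2 * (‖x₁ - x₂‖ + ‖y₁ - y₂‖))
    (hLyy : ∀ x₁ y₁ x₂ y₂, ‖hessyy l x₁ y₁ - hessyy l x₂ y₂‖ ≤ Ll2 * (‖x₁ - x₂‖ + ‖y₁ - y₂‖))
    (hCfx : ∀ x y, ‖gradx f x y‖ ≤ Cfx)
    (hCfy : ∀ x y, ‖grady f x y‖ ≤ Cfy)
    (hClxy : ∀ x y, ‖hessxy l x y‖ ≤ Clxy)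
    (hClyy : ∀ x y, ‖hessyy l x y‖ ≤ Clyy)
    (ystar : EuclideanSpace ℝ (Fin p) → EuclideanSpace ℝ (Fin q))
    (hystar : ∀ x y, y ≠ ystar x → l x (ystar x) < l x y) :
    ∀ x, HasGradientAt (fun x' => f x' (ystar x'))
      (gradx f x (ystar x) -
        hessxy l x (ystar x)
          (Ring.inverse (hessyy l x (ystar x)) (grady f x (ystar x)))) x :=
  hypergradient_formula_general f l μ hμ hfC2 hlC2 hsc ystar hystar
end
end

section
/- The function Φ(x) := f(x, y*(x)) is differentiable and its gradient ∇Φ is L_Φ-Lipschitz on ℝ^p, where L_Φ := (L_{f,1} + L_{l,2}·C_{fy}/μ) · (1 + C_{lxy}/μ)². -/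
noncomputable section

open scoped RealInnerProductSpace

/-!
First-order optimality gives `∇_y l (x, y*(x)) = 0`. Strong convexity makes `∇_y l (x, ·)`
`μ`-strongly monotone, so `y*` is `C_{lxy}/μ`-Lipschitz and `∇_y∇_y l` is `μ`-coercive, hence
invertible (Lax–Milgram). Differentiating the optimality condition along the Lipschitz curve `y*`
gives `Dy* = -(∇_y∇_y l)⁻¹ ∇ₓ(∇_y l)`, and the chain rule together with the symmetry of
`∇_y∇_y l` turns `∇Φ(x)` into `∇ₓf - ∇ₓ∇_y l · v` with `∇_y∇_y l · v = ∇_y f`. Along the graph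
of `y*` every ingredient is Lipschitz with an extra factor `1 + C_{lxy}/μ`; `v` is bounded by
`C_{fy}/μ`, and the perturbation bound for the linear system `∇_y∇_y l · v = ∇_y f` makes it
Lipschitz too, which yields `L_Φ`.
-/

open Filter Topology Set Asymptotics

theorem norm_sub_le_of_lipschitz_of_graph {E F G : Type*} [SeminormedAddCommGroup E]
    [SeminormedAddCommGroup F] [SeminormedAddCommGroup G] {A : E → F → G} {ys : E → F} {L K : ℝ}
    (hA : ∀ x₁ y₁ x₂ y₂, ‖A x₁ y₁ - A x₂ y₂‖ ≤ L * (‖x₁ - x₂‖ + ‖y₁ - y₂‖))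
    (hys : ∀ x₁ x₂, ‖ys x₁ - ys x₂‖ ≤ K * ‖x₁ - x₂‖) (x₁ x₂ : E) :
    ‖A x₁ (ys x₁) - A x₂ (ys x₂)‖ ≤ L * (1 + K) * ‖x₁ - x₂‖ := by
  have hA' := hA x₁ (ys x₁) x₂ (ys x₂)
  rcases (norm_nonneg (x₁ - x₂)).eq_or_lt with hx | hx
  · have hy : ‖ys x₁ - ys x₂‖ = 0 :=
      le_antisymm (by simpa [← hx] using hys x₁ x₂) (norm_nonneg _)
    rw [← hx, hy] at hA'
    simpa [← hx] using hA'
  · have hL : 0 ≤ L := by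
      have h := hA x₁ (ys x₂) x₂ (ys x₂)
      rw [sub_self, norm_zero, add_zero] at h
      exact nonneg_of_mul_nonneg_left ((norm_nonneg _).trans h) hx
    calc ‖A x₁ (ys x₁) - A x₂ (ys x₂)‖ ≤ L * (‖x₁ - x₂‖ + ‖ys x₁ - ys x₂‖) := hA'
      _ ≤ L * (‖x₁ - x₂‖ + K * ‖x₁ - x₂‖) := by gcongr; exact hys x₁ x₂
      _ = L * (1 + K) * ‖x₁ - x₂‖ := by ring

section NormedSpace

variable {E F G : Type*} [NormedAddCommGroup E] [NormedSpace ℝ E] [NormedAddCommGroup F]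
  [NormedSpace ℝ F] [NormedAddCommGroup G] [NormedSpace ℝ G]

theorem HasFDerivAt.partial_left {φ : E → F → G} {D : E × F →L[ℝ] G} {x : E} {y : F}
    (h : HasFDerivAt (fun z : E × F => φ z.1 z.2) D (x, y)) :
    HasFDerivAt (φ · y) (D ∘L ContinuousLinearMap.inl ℝ E F) x := by
  have hinl := hasFDerivAt_prodMk_left (𝕜 := ℝ) x y
  exact h.comp x hinl

theorem HasFDerivAt.partial_right {φ : E → F → G} {D : E × F →L[ℝ] G} {x : E} {y : F}
    (h : HasFDerivAt (fun z : E × F => φ z.1 z.2) D (x, y)) :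
    HasFDerivAt (φ x) (D ∘L ContinuousLinearMap.inr ℝ E F) y := by
  have hinr := hasFDerivAt_prodMk_right (𝕜 := ℝ) x y
  exact h.comp y hinr

/-- The differentiability half of the implicit function theorem, for a solution `ys` of
`g (x, ys x) = 0` that is already known to be Lipschitz at `x₀`. -/
theorem hasFDerivAt_of_eq_zero_of_isBigO {g : E × F → G} {ys : E → F} {x₀ : E}
    {D : E × F →L[ℝ] G} {Y : E →L[ℝ] F} {c : ℝ} (hc : 0 < c) (hg : HasFDerivAt g D (x₀, ys x₀))
    (hzero : ∀ᶠ x in 𝓝 x₀, g (x, ys x) = 0)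
    (hys : (fun x => ys x - ys x₀) =O[𝓝 x₀] fun x => x - x₀)
    (hY : ∀ u, D (u, Y u) = 0) (hD : ∀ v, c * ‖v‖ ≤ ‖D (0, v)‖) : HasFDerivAt ys Y x₀ := by
  have hgraph : (fun x => ((x, ys x) : E × F) - (x₀, ys x₀)) =O[𝓝 x₀] fun x => x - x₀ :=
    (isBigO_refl _ _).prod_left hys
  have hcont : Tendsto (fun x => ((x, ys x) : E × F)) (𝓝 x₀) (𝓝 (x₀, ys x₀)) :=
    tendsto_sub_nhds_zero_iff.1 (hgraph.trans_tendsto (tendsto_sub_nhds_zero_iff.2 tendsto_id))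
  have hsmall : (fun x => D ((x, ys x) - (x₀, ys x₀))) =o[𝓝 x₀] fun x => x - x₀ := by
    refine ((hg.isLittleO.comp_tendsto hcont).trans_isBigO hgraph).neg_left.congr' ?_
      EventuallyEq.rfl
    filter_upwards [hzero] with x hx
    simp only [Function.comp_apply, hx, hzero.self_of_nhds, sub_self, zero_sub, neg_neg]
  have hsplit : ∀ x, D ((x, ys x) - (x₀, ys x₀)) = D (0, ys x - ys x₀ - Y (x - x₀)) := by
    intro x
    have hdecomp : ((x - x₀, ys x - ys x₀) : E × F)
        = (x - x₀, Y (x - x₀)) + (0, ys x - ys x₀ - Y (x - x₀)) := by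
      simp
    rw [Prod.mk_sub_mk, hdecomp, map_add, hY, zero_add]
  rw [hasFDerivAt_iff_isLittleO]
  refine IsBigO.trans_isLittleO ?_ hsmall
  refine IsBigO.of_bound c⁻¹ (Eventually.of_forall fun x => ?_)
  rw [hsplit, le_inv_mul_iff₀ hc]
  exact hD _

theorem mul_norm_sub_le_of_apply_eq {H₁ H₂ : F →L[ℝ] G} {v₁ v₂ : F} {b₁ b₂ : G} {μ : ℝ}
    (hH : ∀ u, μ * ‖u‖ ≤ ‖H₁ u‖) (h₁ : H₁ v₁ = b₁) (h₂ : H₂ v₂ = b₂) :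
    μ * ‖v₁ - v₂‖ ≤ ‖b₁ - b₂‖ + ‖H₁ - H₂‖ * ‖v₂‖ :=
  calc μ * ‖v₁ - v₂‖ ≤ ‖H₁ (v₁ - v₂)‖ := hH _
    _ = ‖(b₁ - b₂) - (H₁ - H₂) v₂‖ := by
      rw [← h₁, ← h₂, map_sub, sub_apply]
      abel_nf
    _ ≤ ‖b₁ - b₂‖ + ‖H₁ - H₂‖ * ‖v₂‖ :=
      (norm_sub_le _ _).trans (add_le_add le_rfl (ContinuousLinearMap.le_opNorm _ _))

theorem norm_sub_sub_apply_le {a₁ a₂ : E} {A₁ A₂ : F →L[ℝ] E} {v₁ v₂ : F} :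
    ‖(a₁ - A₁ v₁) - (a₂ - A₂ v₂)‖ ≤ ‖a₁ - a₂‖ + ‖A₁ - A₂‖ * ‖v₁‖ + ‖A₂‖ * ‖v₁ - v₂‖ := by
  have hsplit : (a₁ - A₁ v₁) - (a₂ - A₂ v₂) = (a₁ - a₂) - ((A₁ - A₂) v₁ + A₂ (v₁ - v₂)) := by
    rw [map_sub, sub_apply]
    abel
  rw [hsplit, add_assoc]
  refine (norm_sub_le _ _).trans (add_le_add le_rfl ((norm_add_le _ _).trans ?_))
  exact add_le_add (ContinuousLinearMap.le_opNorm _ _) (ContinuousLinearMap.le_opNorm _ _)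

end NormedSpace

section InnerProductSpace

variable {F : Type*} [NormedAddCommGroup F] [InnerProductSpace ℝ F]

theorem mul_norm_le_norm_of_mul_sq_le_inner {μ : ℝ} {u w : F} (h : μ * ‖u‖ ^ 2 ≤ ⟪w, u⟫) :
    μ * ‖u‖ ≤ ‖w‖ := by
  rcases (norm_nonneg u).eq_or_lt with hu | hu
  · rw [← hu, mul_zero]
    exact norm_nonneg w
  · refine le_of_mul_le_mul_right ?_ hu
    calc μ * ‖u‖ * ‖u‖ = μ * ‖u‖ ^ 2 := by ring
      _ ≤ ⟪w, u⟫ := h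
      _ ≤ ‖w‖ * ‖u‖ := real_inner_le_norm w u

theorem mul_norm_sub_le_of_strongMonotone {E : Type*} [SeminormedAddCommGroup E] {g : E → F → F}
    {ys : E → F} {μ K : ℝ} (hmono : ∀ x y₁ y₂, μ * ‖y₁ - y₂‖ ^ 2 ≤ ⟪g x y₁ - g x y₂, y₁ - y₂⟫)
    (hlip : ∀ y x₁ x₂, ‖g x₁ y - g x₂ y‖ ≤ K * ‖x₁ - x₂‖) (hzero : ∀ x, g x (ys x) = 0)
    (x₁ x₂ : E) : μ * ‖ys x₁ - ys x₂‖ ≤ K * ‖x₁ - x₂‖ :=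
  calc μ * ‖ys x₁ - ys x₂‖ ≤ ‖g x₁ (ys x₁) - g x₁ (ys x₂)‖ :=
        mul_norm_le_norm_of_mul_sq_le_inner (hmono x₁ _ _)
    _ = ‖g x₂ (ys x₂) - g x₁ (ys x₂)‖ := by rw [hzero, hzero, zero_sub]
    _ ≤ K * ‖x₁ - x₂‖ := by rw [norm_sub_rev x₁]; exact hlip _ _ _

theorem mul_norm_sq_le_inner_of_hasFDerivAt {w : F → F} {G : F →L[ℝ] F} {y : F} {μ : ℝ}
    (hw : HasFDerivAt w G y) (hmono : ∀ y', μ * ‖y' - y‖ ^ 2 ≤ ⟪w y' - w y, y' - y⟫) (v : F) :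
    μ * ‖v‖ ^ 2 ≤ ⟪G v, v⟫ := by
  set ψ : ℝ → ℝ := fun t => ⟪w (y + t • v), v⟫
  have hline : HasDerivAt (fun t : ℝ => y + t • v) v 0 := by
    simpa using ((hasDerivAt_id (0 : ℝ)).smul_const v).const_add y
  have hψ : HasDerivAt ψ ⟪G v, v⟫ 0 := by
    have hw' : HasFDerivAt w G (y + (0 : ℝ) • v) := by simpa using hw
    simpa using (hw'.comp_hasDerivAt 0 hline).inner ℝ (hasDerivAt_const 0 v)
  refine ge_of_tendsto hψ.tendsto_slope_zero_right ?_
  filter_upwards [self_mem_nhdsWithin] with t (ht : 0 < t)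
  have key := hmono (y + t • v)
  rw [add_sub_cancel_left, norm_smul, mul_pow, Real.norm_of_nonneg ht.le, inner_smul_right] at key
  rw [zero_add, smul_eq_mul, le_inv_mul_iff₀ ht]
  simp only [ψ, zero_smul, add_zero, ← inner_sub_left]
  nlinarith

variable [CompleteSpace F]

theorem ConvexOn.inner_le_sub_of_hasGradientAt {h : F → ℝ} {g y : F}
    (hc : ConvexOn ℝ univ h) (hd : HasGradientAt h g y) (z : F) : ⟪g, z - y⟫ ≤ h z - h y := by
  have hline : HasDerivAt (h ∘ AffineMap.lineMap (k := ℝ) y z) ⟪g, z - y⟫ 0 := by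
    have hd' : HasFDerivAt h (InnerProductSpace.toDual ℝ F g) (AffineMap.lineMap y z (0 : ℝ)) := by
      simpa using hd.hasFDerivAt
    exact hd'.comp_hasDerivAt (0 : ℝ) AffineMap.hasDerivAt_lineMap
  simpa [slope_def_field] using
    (hc.comp_affineMap (AffineMap.lineMap y z)).le_slope_of_hasDerivAt (mem_univ 0) (mem_univ 1)
      zero_lt_one hline

theorem StrongConvexOn.mul_norm_sq_le_inner_of_hasGradientAt {h : F → ℝ} {μ : ℝ}
    {y₁ y₂ g₁ g₂ : F} (hc : StrongConvexOn univ μ h) (h₁ : HasGradientAt h g₁ y₁)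
    (h₂ : HasGradientAt h g₂ y₂) : μ * ‖y₁ - y₂‖ ^ 2 ≤ ⟪g₁ - g₂, y₁ - y₂⟫ := by
  have hconv : ConvexOn ℝ univ fun y => h y - μ / 2 * ‖y‖ ^ 2 := strongConvexOn_iff_convex.1 hc
  have hgrad : ∀ {y g : F}, HasGradientAt h g y →
      HasGradientAt (fun y => h y - μ / 2 * ‖y‖ ^ 2) (g - μ • y) y := by
    intro y g hg
    rw [hasGradientAt_iff_hasFDerivAt] at hg ⊢
    refine (hg.sub ((hasStrictFDerivAt_norm_sq y).hasFDerivAt.const_mul (μ / 2))).congr_fderiv ?_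
    ext v
    simp
    ring
  have e₁ := hconv.inner_le_sub_of_hasGradientAt (hgrad h₁) y₂
  have e₂ := hconv.inner_le_sub_of_hasGradientAt (hgrad h₂) y₁
  have hsum : ⟪g₁ - μ • y₁, y₂ - y₁⟫ + ⟪g₂ - μ • y₂, y₁ - y₂⟫
      = μ * ‖y₁ - y₂‖ ^ 2 - ⟪g₁ - g₂, y₁ - y₂⟫ := by
    rw [← real_inner_self_eq_norm_sq, ← neg_sub y₁ y₂, inner_neg_right]
    simp only [inner_sub_left, inner_sub_right, real_inner_smul_left]
    ring
  linarith

theorem isSelfAdjoint_of_hasFDerivAt_gradient {h : F → ℝ} {g : F → F} {H : F →L[ℝ] F} {y : F}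
    (hg : ∀ z, HasGradientAt h (g z) z) (hH : HasFDerivAt g H y) : IsSelfAdjoint H := by
  have hD : ∀ z, HasFDerivAt h ((innerSL ℝ : F →L[ℝ] F →L[ℝ] ℝ) (g z)) z := fun z =>
    (hg z).hasFDerivAt
  have hsymm := second_derivative_symmetric hD
    ((innerSL ℝ : F →L[ℝ] F →L[ℝ] ℝ).hasFDerivAt.comp y hH)
  rw [ContinuousLinearMap.isSelfAdjoint_iff_isSymmetric]
  intro a b
  have hab : ⟪H a, b⟫ = ⟪H b, a⟫ := hsymm a b
  exact hab.trans (real_inner_comm _ _)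

theorem exists_continuousLinearEquiv_of_coercive {H : F →L[ℝ] F} {μ : ℝ} (hμ : 0 < μ)
    (hH : ∀ v, μ * ‖v‖ ^ 2 ≤ ⟪H v, v⟫) : ∃ e : F ≃L[ℝ] F, (e : F →L[ℝ] F) = H := by
  have hB : IsCoercive ((innerSL ℝ : F →L[ℝ] F →L[ℝ] ℝ) ∘L H) :=
    ⟨μ, hμ, fun u => by rw [mul_assoc, ← sq]; exact hH u⟩
  exact ⟨hB.continuousLinearEquivOfBilin, ContinuousLinearMap.ext fun v =>
    ext_inner_right ℝ fun w => hB.continuousLinearEquivOfBilin_apply v w⟩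

theorem hasGradientAt_comp_graph {E : Type*} [NormedAddCommGroup E] [InnerProductSpace ℝ E]
    [CompleteSpace E] {φ : E → F → ℝ} {ys : E → F} {Y : E →L[ℝ] F} {x : E}
    (hφ : DifferentiableAt ℝ (fun z : E × F => φ z.1 z.2) (x, ys x)) (hys : HasFDerivAt ys Y x) :
    HasGradientAt (fun x => φ x (ys x))
      (gradient (φ · (ys x)) x + ContinuousLinearMap.adjoint Y (gradient (φ x) (ys x))) x := by
  have hD := hφ.hasFDerivAt
  rw [hasGradientAt_iff_hasFDerivAt]
  refine (hD.comp x ((hasFDerivAt_id x).prodMk hys)).congr_fderiv ?_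
  ext u
  have hsplit : ((u, Y u) : E × F) = (u, 0) + (0, Y u) := by simp
  simp only [ContinuousLinearMap.comp_apply, ContinuousLinearMap.prod_apply,
    ContinuousLinearMap.id_apply, InnerProductSpace.toDual_apply_apply, inner_add_left,
    ContinuousLinearMap.adjoint_inner_left, inner_gradient_left, hD.partial_left.fderiv,
    hD.partial_right.fderiv]
  rw [hsplit, map_add]
  rfl

end InnerProductSpace

section Bilevel

local notation "𝔼" n:max => EuclideanSpace ℝ (Fin n)

variable {p q : ℕ} {f l : 𝔼 p → 𝔼 q → ℝ}

theorem hasGradientAt_grady (hf : Differentiable ℝ fun z : 𝔼 p × 𝔼 q => f z.1 z.2)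
    (x : 𝔼 p) (y : 𝔼 q) : HasGradientAt (f x) (grady f x y) y :=
  (hf (x, y)).hasFDerivAt.partial_right.differentiableAt.hasGradientAt

theorem contDiff_grady (hl : ContDiff ℝ 2 fun z : 𝔼 p × 𝔼 q => l z.1 z.2) :
    ContDiff ℝ 1 fun z : 𝔼 p × 𝔼 q => grady l z.1 z.2 := by
  have hl1 : Differentiable ℝ fun z : 𝔼 p × 𝔼 q => l z.1 z.2 := hl.differentiable two_ne_zero
  have hgrady : (fun z : 𝔼 p × 𝔼 q => grady l z.1 z.2) = fun z =>
      (InnerProductSpace.toDual ℝ (𝔼 q)).symm.toLinearIsometry.toContinuousLinearMap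
        (fderiv ℝ (fun z : 𝔼 p × 𝔼 q => l z.1 z.2) z ∘L ContinuousLinearMap.inr ℝ (𝔼 p) (𝔼 q)) := by
    funext z
    rw [← (hl1 z).hasFDerivAt.partial_right.fderiv]
    rfl
  rw [hgrady]
  exact ContinuousLinearMap.contDiff _ |>.comp
    ((hl.fderiv_right (by norm_num)).clm_comp contDiff_const)

theorem hasFDerivAt_grady_hessyy (hl : ContDiff ℝ 2 fun z : 𝔼 p × 𝔼 q => l z.1 z.2)
    (x : 𝔼 p) (y : 𝔼 q) : HasFDerivAt (grady l x) (hessyy l x y) y :=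
  ((contDiff_grady hl).differentiable one_ne_zero (x, y)).hasFDerivAt.partial_right.differentiableAt
    |>.hasFDerivAt

theorem mul_norm_sq_le_inner_grady_sub {μ : ℝ}
    (hl : Differentiable ℝ fun z : 𝔼 p × 𝔼 q => l z.1 z.2)
    {x : 𝔼 p} (hsc : StrongConvexOn univ μ (l x)) (y₁ y₂ : 𝔼 q) :
    μ * ‖y₁ - y₂‖ ^ 2 ≤ ⟪grady l x y₁ - grady l x y₂, y₁ - y₂⟫ :=
  hsc.mul_norm_sq_le_inner_of_hasGradientAt (hasGradientAt_grady hl x y₁)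
    (hasGradientAt_grady hl x y₂)

theorem mul_norm_sq_le_inner_hessyy {μ : ℝ} (hl : ContDiff ℝ 2 fun z : 𝔼 p × 𝔼 q => l z.1 z.2)
    {x : 𝔼 p} (hsc : StrongConvexOn univ μ (l x)) (y v : 𝔼 q) :
    μ * ‖v‖ ^ 2 ≤ ⟪hessyy l x y v, v⟫ :=
  mul_norm_sq_le_inner_of_hasFDerivAt (hasFDerivAt_grady_hessyy hl x y)
    (fun y' => mul_norm_sq_le_inner_grady_sub (hl.differentiable two_ne_zero) hsc y' y) v

theorem norm_grady_sub_le {Clxy : ℝ} (hl : ContDiff ℝ 2 fun z : 𝔼 p × 𝔼 q => l z.1 z.2)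
    (hClxy : ∀ x y, ‖hessxy l x y‖ ≤ Clxy) (y : 𝔼 q) (x₁ x₂ : 𝔼 p) :
    ‖grady l x₁ y - grady l x₂ y‖ ≤ Clxy * ‖x₁ - x₂‖ := by
  have hdiff : ∀ x, HasFDerivAt (grady l · y) (fderiv ℝ (grady l · y) x) x := fun x =>
    ((contDiff_grady hl).differentiable one_ne_zero (x, y)).hasFDerivAt.partial_left
      |>.differentiableAt.hasFDerivAt
  refine Convex.norm_image_sub_le_of_norm_fderiv_le (fun x _ => (hdiff x).differentiableAt)
    (fun x _ => ?_) convex_univ (mem_univ x₂) (mem_univ x₁)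
  rw [← LinearIsometryEquiv.norm_map ContinuousLinearMap.adjoint]
  exact hClxy x y

theorem grady_eq_zero_of_forall_le (hl : Differentiable ℝ fun z : 𝔼 p × 𝔼 q => l z.1 z.2)
    {x : 𝔼 p} {y₀ : 𝔼 q} (hmin : ∀ y, l x y₀ ≤ l x y) : grady l x y₀ = 0 := by
  have hloc : IsLocalMin (l x) y₀ := Eventually.of_forall hmin
  simpa using hloc.hasFDerivAt_eq_zero (hasGradientAt_grady hl x y₀).hasFDerivAt

theorem exists_gradvR_eq_zero {μ : ℝ} (hμ : 0 < μ)
    (hl : ContDiff ℝ 2 fun z : 𝔼 p × 𝔼 q => l z.1 z.2) {x : 𝔼 p}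
    (hsc : StrongConvexOn univ μ (l x)) (y : 𝔼 q) : ∃ v, gradvR f l x y v = 0 := by
  obtain ⟨e, he⟩ :=
    exists_continuousLinearEquiv_of_coercive hμ (mul_norm_sq_le_inner_hessyy hl hsc y)
  refine ⟨e.symm (grady f x y), ?_⟩
  rw [gradvR, ← he, ContinuousLinearEquiv.coe_coe, e.apply_symm_apply, sub_self]

theorem exists_hasFDerivAt_of_grady_eq_zero {μ K : ℝ} (hμ : 0 < μ)
    (hl : ContDiff ℝ 2 fun z : 𝔼 p × 𝔼 q => l z.1 z.2) (hsc : ∀ x, StrongConvexOn univ μ (l x))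
    {ys : 𝔼 p → 𝔼 q} (hzero : ∀ x, grady l x (ys x) = 0)
    (hys : ∀ x₁ x₂, ‖ys x₁ - ys x₂‖ ≤ K * ‖x₁ - x₂‖) (x : 𝔼 p) :
    ∃ Y : 𝔼 p →L[ℝ] 𝔼 q, HasFDerivAt ys Y x ∧
      hessyy l x (ys x) ∘L Y = -fderiv ℝ (grady l · (ys x)) x := by
  have hD := ((contDiff_grady hl).differentiable one_ne_zero (x, ys x)).hasFDerivAt
  set D := fderiv ℝ (fun z : 𝔼 p × 𝔼 q => grady l z.1 z.2) (x, ys x)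
  set J := fderiv ℝ (grady l · (ys x)) x
  have hJ : D ∘L ContinuousLinearMap.inl ℝ (𝔼 p) (𝔼 q) = J := hD.partial_left.fderiv.symm
  have hH : D ∘L ContinuousLinearMap.inr ℝ (𝔼 p) (𝔼 q) = hessyy l x (ys x) :=
    hD.partial_right.fderiv.symm
  have hcoer := mul_norm_sq_le_inner_hessyy hl (hsc x) (ys x)
  obtain ⟨e, he⟩ := exists_continuousLinearEquiv_of_coercive hμ hcoer
  have hHY : hessyy l x (ys x) ∘L (-((e.symm : 𝔼 q →L[ℝ] 𝔼 q) ∘L J)) = -J := by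
    ext1 u
    simp [← he]
  refine ⟨_, hasFDerivAt_of_eq_zero_of_isBigO hμ hD (Eventually.of_forall hzero)
    (IsBigO.of_bound K (Eventually.of_forall fun x' => hys x' x)) (fun u => ?_) (fun v => ?_), hHY⟩
  · set Y : 𝔼 p →L[ℝ] 𝔼 q := -((e.symm : 𝔼 q →L[ℝ] 𝔼 q) ∘L J)
    calc D (u, Y u)
        = (D ∘L ContinuousLinearMap.inl ℝ _ _) u + (D ∘L ContinuousLinearMap.inr ℝ _ _) (Y u) := by
          simp [← map_add]
      _ = J u + (hessyy l x (ys x) ∘L Y) u := by rw [hJ, hH]; rfl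
      _ = 0 := by rw [hHY]; simp
  · rw [← ContinuousLinearMap.inr_apply (R := ℝ) (M₁ := 𝔼 p), ← ContinuousLinearMap.comp_apply, hH]
    exact mul_norm_le_norm_of_mul_sq_le_inner (hcoer v)

theorem hasGradientAt_barGradF (hf : Differentiable ℝ fun z : 𝔼 p × 𝔼 q => f z.1 z.2)
    (hl : ContDiff ℝ 2 fun z : 𝔼 p × 𝔼 q => l z.1 z.2) {ys : 𝔼 p → 𝔼 q} {Y : 𝔼 p →L[ℝ] 𝔼 q}
    {x : 𝔼 p} (hY : HasFDerivAt ys Y x)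
    (hHY : hessyy l x (ys x) ∘L Y = -fderiv ℝ (grady l · (ys x)) x) {v : 𝔼 q}
    (hv : gradvR f l x (ys x) v = 0) :
    HasGradientAt (fun x => f x (ys x)) (barGradF f l x (ys x) v) x := by
  have hsa : IsSelfAdjoint (hessyy l x (ys x)) :=
    isSelfAdjoint_of_hasFDerivAt_gradient (hasGradientAt_grady (hl.differentiable two_ne_zero) x)
      (hasFDerivAt_grady_hessyy hl x (ys x))
  have hb : grady f x (ys x) = hessyy l x (ys x) v := (sub_eq_zero.1 hv).symm
  -- `Y† (∇_y f) = Y† (H v) = (H ∘ Y)† v = -(∇ₓ∇_y l) v`, as `H = ∇_y∇_y l` is self-adjoint.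
  have hadj : ContinuousLinearMap.adjoint Y (grady f x (ys x)) = -hessxy l x (ys x) v := by
    rw [hb, ← hsa.adjoint_eq, ← ContinuousLinearMap.comp_apply, ← ContinuousLinearMap.adjoint_comp,
      hHY, map_neg]
    rfl
  convert hasGradientAt_comp_graph (hf (x, ys x)) hY using 1
  rw [barGradF, sub_eq_add_neg, ← hadj]
  rfl

theorem norm_le_of_gradvR_eq_zero {μ Cfy : ℝ} (hμ : 0 < μ) (hCfy : ∀ x y, ‖grady f x y‖ ≤ Cfy)
    {x : 𝔼 p} {y v : 𝔼 q} (hcoer : μ * ‖v‖ ≤ ‖hessyy l x y v‖) (hv : gradvR f l x y v = 0) :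
    ‖v‖ ≤ Cfy / μ := by
  rw [le_div_iff₀ hμ, mul_comm]
  exact hcoer.trans (sub_eq_zero.1 hv ▸ hCfy x y)

theorem norm_sub_le_of_gradvR_eq_zero {μ Lf1 Ll2 Cfy K : ℝ} (hμ : 0 < μ)
    (hLfy : ∀ x₁ y₁ x₂ y₂, ‖grady f x₁ y₁ - grady f x₂ y₂‖ ≤ Lf1 * (‖x₁ - x₂‖ + ‖y₁ - y₂‖))
    (hLyy : ∀ x₁ y₁ x₂ y₂, ‖hessyy l x₁ y₁ - hessyy l x₂ y₂‖ ≤ Ll2 * (‖x₁ - x₂‖ + ‖y₁ - y₂‖))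
    (hCfy : ∀ x y, ‖grady f x y‖ ≤ Cfy) (hcoer : ∀ x y u, μ * ‖u‖ ≤ ‖hessyy l x y u‖)
    {ys : 𝔼 p → 𝔼 q} (hys : ∀ x₁ x₂, ‖ys x₁ - ys x₂‖ ≤ K * ‖x₁ - x₂‖) {v : 𝔼 p → 𝔼 q}
    (hv : ∀ x, gradvR f l x (ys x) (v x) = 0) (x₁ x₂ : 𝔼 p) :
    ‖v x₁ - v x₂‖ ≤ (Lf1 + Ll2 * Cfy / μ) * (1 + K) * ‖x₁ - x₂‖ / μ := by
  have hHyy := norm_sub_le_of_lipschitz_of_graph hLyy hys x₁ x₂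
  rw [le_div_iff₀ hμ, mul_comm]
  calc μ * ‖v x₁ - v x₂‖
      ≤ ‖grady f x₁ (ys x₁) - grady f x₂ (ys x₂)‖
        + ‖hessyy l x₁ (ys x₁) - hessyy l x₂ (ys x₂)‖ * ‖v x₂‖ :=
        mul_norm_sub_le_of_apply_eq (hcoer _ _) (sub_eq_zero.1 (hv x₁)) (sub_eq_zero.1 (hv x₂))
    _ ≤ Lf1 * (1 + K) * ‖x₁ - x₂‖ + Ll2 * (1 + K) * ‖x₁ - x₂‖ * (Cfy / μ) :=
        add_le_add (norm_sub_le_of_lipschitz_of_graph hLfy hys x₁ x₂)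
          (mul_le_mul hHyy (norm_le_of_gradvR_eq_zero hμ hCfy (hcoer _ _ _) (hv x₂))
            (norm_nonneg _) ((norm_nonneg _).trans hHyy))
    _ = (Lf1 + Ll2 * Cfy / μ) * (1 + K) * ‖x₁ - x₂‖ := by ring

theorem norm_barGradF_sub_le {μ Lf1 Ll2 Cfy Clxy : ℝ} (hμ : 0 < μ)
    (hLfx : ∀ x₁ y₁ x₂ y₂, ‖gradx f x₁ y₁ - gradx f x₂ y₂‖ ≤ Lf1 * (‖x₁ - x₂‖ + ‖y₁ - y₂‖))
    (hLfy : ∀ x₁ y₁ x₂ y₂, ‖grady f x₁ y₁ - grady f x₂ y₂‖ ≤ Lf1 * (‖x₁ - x₂‖ + ‖y₁ - y₂‖))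
    (hLxy : ∀ x₁ y₁ x₂ y₂, ‖hessxy l x₁ y₁ - hessxy l x₂ y₂‖ ≤ Ll2 * (‖x₁ - x₂‖ + ‖y₁ - y₂‖))
    (hLyy : ∀ x₁ y₁ x₂ y₂, ‖hessyy l x₁ y₁ - hessyy l x₂ y₂‖ ≤ Ll2 * (‖x₁ - x₂‖ + ‖y₁ - y₂‖))
    (hCfy : ∀ x y, ‖grady f x y‖ ≤ Cfy) (hClxy : ∀ x y, ‖hessxy l x y‖ ≤ Clxy)
    (hcoer : ∀ x y u, μ * ‖u‖ ≤ ‖hessyy l x y u‖) {ys : 𝔼 p → 𝔼 q}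
    (hys : ∀ x₁ x₂, ‖ys x₁ - ys x₂‖ ≤ Clxy / μ * ‖x₁ - x₂‖) {v : 𝔼 p → 𝔼 q}
    (hv : ∀ x, gradvR f l x (ys x) (v x) = 0) (x₁ x₂ : 𝔼 p) :
    ‖barGradF f l x₁ (ys x₁) (v x₁) - barGradF f l x₂ (ys x₂) (v x₂)‖ ≤
      (Lf1 + Ll2 * Cfy / μ) * (1 + Clxy / μ) ^ 2 * ‖x₁ - x₂‖ := by
  have hHxy := norm_sub_le_of_lipschitz_of_graph hLxy hys x₁ x₂
  calc ‖barGradF f l x₁ (ys x₁) (v x₁) - barGradF f l x₂ (ys x₂) (v x₂)‖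
      ≤ ‖gradx f x₁ (ys x₁) - gradx f x₂ (ys x₂)‖
        + ‖hessxy l x₁ (ys x₁) - hessxy l x₂ (ys x₂)‖ * ‖v x₁‖
        + ‖hessxy l x₂ (ys x₂)‖ * ‖v x₁ - v x₂‖ := norm_sub_sub_apply_le
    _ ≤ Lf1 * (1 + Clxy / μ) * ‖x₁ - x₂‖ + Ll2 * (1 + Clxy / μ) * ‖x₁ - x₂‖ * (Cfy / μ)
        + Clxy * ((Lf1 + Ll2 * Cfy / μ) * (1 + Clxy / μ) * ‖x₁ - x₂‖ / μ) := by
      gcongr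
      · exact norm_sub_le_of_lipschitz_of_graph hLfx hys x₁ x₂
      · exact (norm_nonneg _).trans hHxy
      · exact norm_le_of_gradvR_eq_zero hμ hCfy (hcoer _ _ _) (hv x₁)
      · exact (norm_nonneg _).trans (hClxy 0 0)
      · exact hClxy _ _
      · exact norm_sub_le_of_gradvR_eq_zero hμ hLfy hLyy hCfy hcoer hys hv x₁ x₂
    _ = (Lf1 + Ll2 * Cfy / μ) * (1 + Clxy / μ) ^ 2 * ‖x₁ - x₂‖ := by
      field_simp

end Bilevel

theorem hyperobjective_gradient_lipschitz_general
    {p q : ℕ} (f l : EuclideanSpace ℝ (Fin p) → EuclideanSpace ℝ (Fin q) → ℝ)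
    (μ Lf1 Ll2 Cfy Clxy : ℝ) (hμ : 0 < μ)
    (hfC2 : ContDiff ℝ 2 (fun pr : EuclideanSpace ℝ (Fin p) × EuclideanSpace ℝ (Fin q) =>
      f pr.1 pr.2))
    (hlC2 : ContDiff ℝ 2 (fun pr : EuclideanSpace ℝ (Fin p) × EuclideanSpace ℝ (Fin q) =>
      l pr.1 pr.2))
    (hsc : ∀ x, StrongConvexOn Set.univ μ (l x))
    (hLfx : ∀ x₁ y₁ x₂ y₂, ‖gradx f x₁ y₁ - gradx f x₂ y₂‖ ≤ Lf1 * (‖x₁ - x₂‖ + ‖y₁ - y₂‖))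
    (hLfy : ∀ x₁ y₁ x₂ y₂, ‖grady f x₁ y₁ - grady f x₂ y₂‖ ≤ Lf1 * (‖x₁ - x₂‖ + ‖y₁ - y₂‖))
    (hLxy : ∀ x₁ y₁ x₂ y₂, ‖hessxy l x₁ y₁ - hessxy l x₂ y₂‖ ≤ Ll2 * (‖x₁ - x₂‖ + ‖y₁ - y₂‖))
    (hLyy : ∀ x₁ y₁ x₂ y₂, ‖hessyy l x₁ y₁ - hessyy l x₂ y₂‖ ≤ Ll2 * (‖x₁ - x₂‖ + ‖y₁ - y₂‖))
    (hCfy : ∀ x y, ‖grady f x y‖ ≤ Cfy)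
    (hClxy : ∀ x y, ‖hessxy l x y‖ ≤ Clxy)
    (ystar : EuclideanSpace ℝ (Fin p) → EuclideanSpace ℝ (Fin q))
    (hystar : ∀ x y, y ≠ ystar x → l x (ystar x) < l x y) :
    Differentiable ℝ (fun x => f x (ystar x)) ∧
      ∀ x₁ x₂,
        ‖gradient (fun x => f x (ystar x)) x₁ - gradient (fun x => f x (ystar x)) x₂‖ ≤
          (Lf1 + Ll2 * Cfy / μ) * (1 + Clxy / μ) ^ 2 * ‖x₁ - x₂‖ := by
  have hl1 := hlC2.differentiable two_ne_zero
  have hzero : ∀ x, grady l x (ystar x) = 0 := fun x =>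
    grady_eq_zero_of_forall_le hl1 fun y => by
      rcases eq_or_ne y (ystar x) with rfl | hy
      exacts [le_rfl, (hystar x y hy).le]
  have hys : ∀ x₁ x₂, ‖ystar x₁ - ystar x₂‖ ≤ Clxy / μ * ‖x₁ - x₂‖ := fun x₁ x₂ => by
    rw [div_mul_eq_mul_div, le_div_iff₀ hμ, mul_comm]
    exact mul_norm_sub_le_of_strongMonotone (fun x => mul_norm_sq_le_inner_grady_sub hl1 (hsc x))
      (norm_grady_sub_le hlC2 hClxy) hzero x₁ x₂
  choose v hv using fun x => exists_gradvR_eq_zero (f := f) hμ hlC2 (hsc x) (ystar x)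
  have hΦ : ∀ x, HasGradientAt (fun x => f x (ystar x)) (barGradF f l x (ystar x) (v x)) x := by
    intro x
    obtain ⟨Y, hY, hHY⟩ := exists_hasFDerivAt_of_grady_eq_zero hμ hlC2 hsc hzero hys x
    exact hasGradientAt_barGradF (hfC2.differentiable two_ne_zero) hlC2 hY hHY (hv x)
  refine ⟨fun x => (hΦ x).differentiableAt, fun x₁ x₂ => ?_⟩
  rw [(hΦ x₁).gradient, (hΦ x₂).gradient]
  exact norm_barGradF_sub_le hμ hLfx hLfy hLxy hLyy hCfy hClxy
    (fun x y u =>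
      mul_norm_le_norm_of_mul_sq_le_inner (mul_norm_sq_le_inner_hessyy hlC2 (hsc x) y u))
    hys hv x₁ x₂

/-- **Smoothness of the total objective (Lemma C.2 part 1)**: `Φ(x) := f(x, y*(x))` is
differentiable and its gradient is `L_Φ`-Lipschitz with
`L_Φ = (L_{f,1} + L_{l,2}·C_{fy}/μ)·(1 + C_{lxy}/μ)²`. -/
theorem hyperobjective_gradient_lipschitz
    {p q : ℕ} (f l : EuclideanSpace ℝ (Fin p) → EuclideanSpace ℝ (Fin q) → ℝ)
    (μ Lf1 Ll2 Cfx Cfy Clxy Clyy : ℝ) (hμ : 0 < μ)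
    (hfC2 : ContDiff ℝ 2 (fun pr : EuclideanSpace ℝ (Fin p) × EuclideanSpace ℝ (Fin q) =>
      f pr.1 pr.2))
    (hlC2 : ContDiff ℝ 2 (fun pr : EuclideanSpace ℝ (Fin p) × EuclideanSpace ℝ (Fin q) =>
      l pr.1 pr.2))
    (hsc : ∀ x, StrongConvexOn Set.univ μ (l x))
    (hLfx : ∀ x₁ y₁ x₂ y₂, ‖gradx f x₁ y₁ - gradx f x₂ y₂‖ ≤ Lf1 * (‖x₁ - x₂‖ + ‖y₁ - y₂‖))
    (hLfy : ∀ x₁ y₁ x₂ y₂, ‖grady f x₁ y₁ - grady f x₂ y₂‖ ≤ Lf1 * (‖x₁ - x₂‖ + ‖y₁ - y₂‖))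
    (hLxy : ∀ x₁ y₁ x₂ y₂, ‖hessxy l x₁ y₁ - hessxy l x₂ y₂‖ ≤ Ll2 * (‖x₁ - x₂‖ + ‖y₁ - y₂‖))
    (hLyy : ∀ x₁ y₁ x₂ y₂, ‖hessyy l x₁ y₁ - hessyy l x₂ y₂‖ ≤ Ll2 * (‖x₁ - x₂‖ + ‖y₁ - y₂‖))
    (hCfx : ∀ x y, ‖gradx f x y‖ ≤ Cfx)
    (hCfy : ∀ x y, ‖grady f x y‖ ≤ Cfy)
    (hClxy : ∀ x y, ‖hessxy l x y‖ ≤ Clxy)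
    (hClyy : ∀ x y, ‖hessyy l x y‖ ≤ Clyy)
    (ystar : EuclideanSpace ℝ (Fin p) → EuclideanSpace ℝ (Fin q))
    (hystar : ∀ x y, y ≠ ystar x → l x (ystar x) < l x y) :
    Differentiable ℝ (fun x => f x (ystar x)) ∧
      ∀ x₁ x₂,
        ‖gradient (fun x => f x (ystar x)) x₁ - gradient (fun x => f x (ystar x)) x₂‖ ≤
          (Lf1 + Ll2 * Cfy / μ) * (1 + Clxy / μ) ^ 2 * ‖x₁ - x₂‖ :=
  hyperobjective_gradient_lipschitz_general f l μ Lf1 Ll2 Cfy Clxy hμ hfC2 hlC2 hsc hLfx hLfy hLxy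
    hLyy hCfy hClxy ystar hystar
end
end

section
/- The hypergradient surrogate ∇̄f(x,y,v) := ∇_x f(x,y) − ∇_x∇_y l(x,y) v is jointly L̄_f-Lipschitz on the region ‖v‖ ≤ C_{fy}/μ: for all (x₁,y₁,v₁), (x₂,y₂,v₂) with ‖v₁‖ ≤ C_{fy}/μ, ‖∇̄f(x₁,y₁,v₁) − ∇̄f(x₂,y₂,v₂)‖ ≤ L̄_f · (‖x₁ − x₂‖ + ‖y₁ − y₂‖ + ‖v₁ − v₂‖), where L̄_f := max{ C_{fy}·L_{l,2}/μ + L_{f,1}, L_{l,1} }. -/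
noncomputable section

open scoped RealInnerProductSpace

/-! Write `∇̄f(x₁,y₁,v₁) - ∇̄f(x₂,y₂,v₂) = (∇ₓf₁ - ∇ₓf₂) - ((H₁ - H₂) v₁ + H₂ (v₁ - v₂))` with
`Hᵢ = ∇ₓ∇_y l(xᵢ,yᵢ)`: the Hessian difference is paid for with `‖v₁‖ ≤ C_{fy}/μ`, the change of `v`
with `‖H₂‖ ≤ L_{l,1}`. -/

theorem norm_sub_apply_sub_sub_apply_le {𝕜 E F : Type*} [NontriviallyNormedField 𝕜]
    [SeminormedAddCommGroup E] [NormedSpace 𝕜 E] [SeminormedAddCommGroup F] [NormedSpace 𝕜 F]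
    {a b : F} {A B : E →L[𝕜] F} {u v : E} {α β γ δ R : ℝ}
    (hab : ‖a - b‖ ≤ α * δ) (hAB : ‖A - B‖ ≤ β * δ) (hB : ‖B‖ ≤ γ) (hu : ‖u‖ ≤ R) :
    ‖(a - A u) - (b - B v)‖ ≤ (R * β + α) * δ + γ * ‖u - v‖ := by
  have hsplit : (a - A u) - (b - B v) = (a - b) - ((A - B) u + B (u - v)) := by
    simp only [sub_apply, map_sub]
    abel
  have hdiff : ‖(A - B) u‖ ≤ R * (β * δ) :=
    calc ‖(A - B) u‖ ≤ ‖A - B‖ * ‖u‖ := (A - B).le_opNorm u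
      _ ≤ β * δ * R := mul_le_mul hAB hu (norm_nonneg u) ((norm_nonneg _).trans hAB)
      _ = R * (β * δ) := mul_comm _ _
  have hshift : ‖B (u - v)‖ ≤ γ * ‖u - v‖ :=
    (B.le_opNorm _).trans (mul_le_mul_of_nonneg_right hB (norm_nonneg _))
  calc ‖(a - A u) - (b - B v)‖ ≤ ‖a - b‖ + (‖(A - B) u‖ + ‖B (u - v)‖) := by
        rw [hsplit]
        exact (norm_sub_le _ _).trans (add_le_add_right (norm_add_le _ _) _)
    _ ≤ α * δ + (R * (β * δ) + γ * ‖u - v‖) := by gcongr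
    _ = (R * β + α) * δ + γ * ‖u - v‖ := by ring

theorem mul_add_mul_le_max_mul_add {α β s t : ℝ} (hs : 0 ≤ s) (ht : 0 ≤ t) :
    α * s + β * t ≤ max α β * (s + t) := by
  rw [mul_add]
  gcongr
  exacts [le_max_left α β, le_max_right α β]

theorem barGradF_joint_lipschitz_general
    {p q : ℕ} (f l : EuclideanSpace ℝ (Fin p) → EuclideanSpace ℝ (Fin q) → ℝ)
    (μ Lf1 Ll1 Ll2 Cfy : ℝ)
    (hLfx : ∀ x₁ y₁ x₂ y₂, ‖gradx f x₁ y₁ - gradx f x₂ y₂‖ ≤ Lf1 * (‖x₁ - x₂‖ + ‖y₁ - y₂‖))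
    (hLxy : ∀ x₁ y₁ x₂ y₂, ‖hessxy l x₁ y₁ - hessxy l x₂ y₂‖ ≤ Ll2 * (‖x₁ - x₂‖ + ‖y₁ - y₂‖))
    (hLl1 : ∀ x y, ‖hessxy l x y‖ ≤ Ll1) :
    ∀ x₁ y₁ v₁ x₂ y₂ v₂, ‖v₁‖ ≤ Cfy / μ →
      ‖barGradF f l x₁ y₁ v₁ - barGradF f l x₂ y₂ v₂‖ ≤
        max (Cfy * Ll2 / μ + Lf1) Ll1 * (‖x₁ - x₂‖ + ‖y₁ - y₂‖ + ‖v₁ - v₂‖) := by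
  intro x₁ y₁ v₁ x₂ y₂ v₂ hv
  have hconst : Cfy / μ * Ll2 = Cfy * Ll2 / μ := div_mul_eq_mul_div Cfy μ Ll2
  calc ‖barGradF f l x₁ y₁ v₁ - barGradF f l x₂ y₂ v₂‖
      ≤ (Cfy / μ * Ll2 + Lf1) * (‖x₁ - x₂‖ + ‖y₁ - y₂‖) + Ll1 * ‖v₁ - v₂‖ :=
        norm_sub_apply_sub_sub_apply_le (hLfx x₁ y₁ x₂ y₂) (hLxy x₁ y₁ x₂ y₂) (hLl1 x₂ y₂) hv
    _ ≤ max (Cfy * Ll2 / μ + Lf1) Ll1 * (‖x₁ - x₂‖ + ‖y₁ - y₂‖ + ‖v₁ - v₂‖) := by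
        rw [hconst]
        exact mul_add_mul_le_max_mul_add (by positivity) (norm_nonneg _)

/-- **Lemma C.3 part 5**: the hypergradient surrogate `∇̄f` is jointly `L̄_f`-Lipschitz in
`(x,y,v)` on the region `‖v‖ ≤ C_{fy}/μ`, with
`L̄_f = max{C_{fy}L_{l,2}/μ + L_{f,1}, L_{l,1}}`. -/
theorem barGradF_joint_lipschitz
    {p q : ℕ} (f l : EuclideanSpace ℝ (Fin p) → EuclideanSpace ℝ (Fin q) → ℝ)
    (μ Lf1 Ll1 Ll2 Cfy : ℝ) (hμ : 0 < μ)
    (hfC2 : ContDiff ℝ 2 (fun pr : EuclideanSpace ℝ (Fin p) × EuclideanSpace ℝ (Fin q) =>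
      f pr.1 pr.2))
    (hlC2 : ContDiff ℝ 2 (fun pr : EuclideanSpace ℝ (Fin p) × EuclideanSpace ℝ (Fin q) =>
      l pr.1 pr.2))
    (hLfx : ∀ x₁ y₁ x₂ y₂, ‖gradx f x₁ y₁ - gradx f x₂ y₂‖ ≤ Lf1 * (‖x₁ - x₂‖ + ‖y₁ - y₂‖))
    (hLfy : ∀ x₁ y₁ x₂ y₂, ‖grady f x₁ y₁ - grady f x₂ y₂‖ ≤ Lf1 * (‖x₁ - x₂‖ + ‖y₁ - y₂‖))
    (hLxy : ∀ x₁ y₁ x₂ y₂, ‖hessxy l x₁ y₁ - hessxy l x₂ y₂‖ ≤ Ll2 * (‖x₁ - x₂‖ + ‖y₁ - y₂‖))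
    (hCfy : ∀ x y, ‖grady f x y‖ ≤ Cfy)
    (hLl1 : ∀ x y, ‖hessxy l x y‖ ≤ Ll1) :
    ∀ x₁ y₁ v₁ x₂ y₂ v₂, ‖v₁‖ ≤ Cfy / μ →
      ‖barGradF f l x₁ y₁ v₁ - barGradF f l x₂ y₂ v₂‖ ≤
        max (Cfy * Ll2 / μ + Lf1) Ll1 * (‖x₁ - x₂‖ + ‖y₁ - y₂‖ + ‖v₁ - v₂‖) :=
  barGradF_joint_lipschitz_general f l μ Lf1 Ll1 Ll2 Cfy hLfx hLxy hLl1
end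
end

section
/- Let W be an n×n real matrix with W𝟙 = 𝟙 and 𝟙ᵀW = 𝟙ᵀ, let J := (1/n)𝟙𝟙ᵀ, and suppose ρ := ‖W − J‖₂² < 1, where ‖·‖₂ denotes the ℓ²-operator (spectral) norm. Let (X_t)_{t≥0} and (U_t)_{t≥0} be sequences of n×p real matrices satisfying X_{t+1} = W·(X_t − U_t) for all t. Then for every integer T ≥ 0, Σ_{k=0}^{T} ‖X_k − J X_k‖_F² ≤ (2/(1−ρ)) · ‖X_0 − J X_0‖_F² + (4ρ/(1−ρ)²) · Σ_{k=0}^{T−1} ‖U_k‖_F², where ‖·‖_F is the Frobenius norm. -/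
/-!
The consensus residual `Y t := X t - J X t` obeys `Y (t+1) = (W - J) (Y t - U t)`, because
`J W = W J = J J = J`. Since `‖(W - J) M‖_F ≤ ‖W - J‖₂ ‖M‖_F`, Young's inequality with parameter
`(1 - ρ) / (2ρ)` gives the contraction `‖Y (t+1)‖² ≤ (1+ρ)/2 ‖Y t‖² + 2ρ/(1-ρ) ‖U t‖²`, and
summing this geometric recursion bounds the accumulated error by `1 / (1 - (1+ρ)/2) = 2/(1-ρ)`
times the initial error plus the inputs.
-/

open Finset Matrix WithLp

attribute [local instance] Matrix.frobeniusNormedAddCommGroup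

lemma sum_range_succ_le_div_of_le_mul_add {e u : ℕ → ℝ} {q c : ℝ} (hq₀ : 0 ≤ q) (hq₁ : q < 1)
    (he : ∀ k, 0 ≤ e k) (h : ∀ k, e (k + 1) ≤ q * e k + c * u k) (T : ℕ) :
    ∑ k ∈ range (T + 1), e k ≤ (e 0 + c * ∑ k ∈ range T, u k) / (1 - q) := by
  have hshift : ∑ k ∈ range T, e (k + 1) ≤ q * ∑ k ∈ range T, e k + c * ∑ k ∈ range T, u k := by
    rw [mul_sum, mul_sum, ← sum_add_distrib]
    exact sum_le_sum fun k _ => h k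
  rw [le_div_iff₀ (by linarith)]
  nlinarith [sum_range_succ' e T, sum_range_succ e T, mul_nonneg hq₀ (he T)]

/-- Young's inequality with parameter `λ = (1 - ρ) / (2ρ)`. -/
lemma mul_add_sq_le_young {ρ : ℝ} (hρ₀ : 0 ≤ ρ) (hρ₁ : ρ < 1) (a b : ℝ) :
    ρ * (a + b) ^ 2 ≤ (1 + ρ) / 2 * a ^ 2 + 2 * ρ / (1 - ρ) * b ^ 2 := by
  have h1ρ : 0 < 1 - ρ := by linarith
  have key : (1 + ρ) / 2 * a ^ 2 + 2 * ρ / (1 - ρ) * b ^ 2 - ρ * (a + b) ^ 2 =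
      (((1 - ρ) * a - 2 * ρ * b) ^ 2 + 2 * ρ * (1 - ρ) * b ^ 2) / (2 * (1 - ρ)) := by
    field_simp
    ring
  have : 0 ≤ (((1 - ρ) * a - 2 * ρ * b) ^ 2 + 2 * ρ * (1 - ρ) * b ^ 2) / (2 * (1 - ρ)) := by
    positivity
  linarith

section Frobenius

variable {𝕜 m n : Type*} [RCLike 𝕜] [Fintype m] [Fintype n]

lemma frobenius_norm_sq_eq_sum_sq (M : Matrix m n ℝ) : ‖M‖ ^ 2 = ∑ i, ∑ j, M i j ^ 2 := by
  rw [frobenius_norm_def, ← Real.rpow_natCast, ← Real.rpow_mul (by positivity)]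
  norm_num [sq_abs]

lemma frobenius_norm_sq_eq_sum_col (M : Matrix m n 𝕜) :
    ‖M‖ ^ 2 = ∑ j, ‖toLp 2 (fun i => M i j)‖ ^ 2 := by
  rw [← frobenius_norm_transpose]
  change ‖toLp 2 fun j => toLp 2 fun i => M i j‖ ^ 2 = _
  rw [PiLp.norm_sq_eq_of_L2]

lemma frobenius_norm_mul_le_l2_opNorm [DecidableEq m] (A : Matrix m m 𝕜) (M : Matrix m n 𝕜) :
    ‖A * M‖ ≤ ‖toEuclideanCLM (𝕜 := 𝕜) A‖ * ‖M‖ := by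
  refine le_of_sq_le_sq ?_ (by positivity)
  rw [mul_pow, frobenius_norm_sq_eq_sum_col, frobenius_norm_sq_eq_sum_col, mul_sum]
  refine sum_le_sum fun j _ => ?_
  have hcol : toLp 2 (fun i => (A * M) i j) = toEuclideanCLM (𝕜 := 𝕜) A (toLp 2 fun i => M i j) := by
    ext i; simp [mul_apply, mulVec, dotProduct]
  rw [hcol, ← mul_pow]
  exact pow_le_pow_left₀ (norm_nonneg _) (ContinuousLinearMap.le_opNorm _ _) 2

lemma frobenius_norm_mul_sub_sq_le [DecidableEq m] {A : Matrix m m ℝ} {ρ : ℝ}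
    (hA : ‖toEuclideanCLM (𝕜 := ℝ) A‖ ^ 2 ≤ ρ) (hρ : ρ < 1) (M V : Matrix m n ℝ) :
    ‖A * (M - V)‖ ^ 2 ≤ (1 + ρ) / 2 * ‖M‖ ^ 2 + 2 * ρ / (1 - ρ) * ‖V‖ ^ 2 :=
  calc ‖A * (M - V)‖ ^ 2 ≤ (‖toEuclideanCLM (𝕜 := ℝ) A‖ * (‖M‖ + ‖V‖)) ^ 2 := by
        gcongr
        exact (frobenius_norm_mul_le_l2_opNorm A _).trans (by gcongr; exact norm_sub_le M V)
    _ ≤ ρ * (‖M‖ + ‖V‖) ^ 2 := by rw [mul_pow]; gcongr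
    _ ≤ _ := mul_add_sq_le_young ((sq_nonneg _).trans hA) hρ _ _

end Frobenius

section Averaging

variable {α ι κ : Type*} [Semiring α] [Fintype ι]

lemma of_const_mul_eq_of_sum_col_eq_one (c : α) {W : Matrix ι κ α} (hW : ∀ j, ∑ i, W i j = 1) :
    (of fun (_ : κ) (_ : ι) => c) * W = of fun _ _ => c := by
  ext i j
  simp [mul_apply, ← mul_sum, hW]

lemma mul_of_const_eq_of_sum_row_eq_one (c : α) {W : Matrix κ ι α} (hW : ∀ i, ∑ j, W i j = 1) :
    W * (of fun (_ : ι) (_ : κ) => c) = of fun _ _ => c := by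
  ext i j
  simp [mul_apply, ← sum_mul, hW]

end Averaging

lemma sum_col_of_inv_card {n : ℕ} (j : Fin n) :
    ∑ i, (of fun (_ _ : Fin n) => (n : ℝ)⁻¹) i j = 1 := by
  have : (n : ℝ) ≠ 0 := by exact_mod_cast j.pos.ne'
  simp [this]

lemma mul_sub_sub_mul_mul_sub {α ι κ : Type*} [Ring α] [Fintype ι]
    {W J : Matrix ι ι α} (hJW : J * W = J) (hWJ : W * J = J) (hJJ : J * J = J)
    (X U : Matrix ι κ α) :
    W * (X - U) - J * (W * (X - U)) = (W - J) * (X - J * X - U) := by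
  simp only [Matrix.mul_sub, Matrix.sub_mul, ← Matrix.mul_assoc, hJW, hWJ, hJJ]
  abel

/-- **Abstract consensus-error bound** (core of Lemma 5 / Lemma D.4): for a doubly stochastic
mixing matrix `W` whose deviation from the averaging matrix `J = 𝟙𝟙ᵀ/n` has squared spectral
norm `ρ < 1`, and iterates `X (t+1) = W (X t − U t)`, the accumulated squared Frobenius
consensus error is bounded by `2/(1−ρ)·‖X₀ − J X₀‖_F² + 4ρ/(1−ρ)²·∑‖U k‖_F²`. -/
theorem consensus_error_sum_bound
    {n pdim : ℕ}
    (W : Matrix (Fin n) (Fin n) ℝ)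
    (hWrow : ∀ i, ∑ j, W i j = 1)
    (hWcol : ∀ j, ∑ i, W i j = 1)
    (J : Matrix (Fin n) (Fin n) ℝ) (hJ : J = Matrix.of fun _ _ => (n : ℝ)⁻¹)
    (ρ : ℝ) (hρdef : ρ = ‖Matrix.toEuclideanCLM (𝕜 := ℝ) (W - J)‖ ^ 2)
    (hρ : ρ < 1)
    (X U : ℕ → Matrix (Fin n) (Fin pdim) ℝ)
    (hrec : ∀ t, X (t + 1) = W * (X t - U t)) :
    ∀ T : ℕ,
      ∑ k ∈ Finset.range (T + 1), ∑ i, ∑ j, ((X k - J * X k) i j) ^ 2 ≤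
        2 / (1 - ρ) * (∑ i, ∑ j, ((X 0 - J * X 0) i j) ^ 2) +
          4 * ρ / (1 - ρ) ^ 2 * ∑ k ∈ Finset.range T, ∑ i, ∑ j, (U k i j) ^ 2 := by
  have hρ₀ : 0 ≤ ρ := hρdef ▸ sq_nonneg _
  have hJW : J * W = J := hJ ▸ of_const_mul_eq_of_sum_col_eq_one _ hWcol
  have hWJ : W * J = J := hJ ▸ mul_of_const_eq_of_sum_row_eq_one _ hWrow
  have hJJ : J * J = J := hJ ▸ of_const_mul_eq_of_sum_col_eq_one _ sum_col_of_inv_card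
  have hstep : ∀ k, ‖X (k + 1) - J * X (k + 1)‖ ^ 2 ≤
      (1 + ρ) / 2 * ‖X k - J * X k‖ ^ 2 + 2 * ρ / (1 - ρ) * ‖U k‖ ^ 2 := fun k => by
    rw [hrec, mul_sub_sub_mul_mul_sub hJW hWJ hJJ]
    exact frobenius_norm_mul_sub_sq_le hρdef.ge hρ _ _
  intro T
  simp only [← frobenius_norm_sq_eq_sum_sq]
  calc _ ≤ _ := sum_range_succ_le_div_of_le_mul_add (by linarith) (by linarith)
          (fun k => sq_nonneg _) hstep T
    _ = _ := by
      have : 1 - ρ ≠ 0 := by linarith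
      rw [show 1 - (1 + ρ) / 2 = (1 - ρ) / 2 by ring]
      field_simp
      ring
end

section
/- Let W be an n×n real matrix with W𝟙 = 𝟙 and 𝟙ᵀW = 𝟙ᵀ, let J := (1/n)𝟙𝟙ᵀ, and suppose ρ := ‖W − J‖₂² < 1, where ‖·‖₂ is the ℓ²-operator (spectral) norm. Let (k_t)_{t≥0} and (h_t)_{t≥0} be sequences of vectors in ℝⁿ satisfying k_{t+1} = W·(k_t + h_t), with k_0 = J k_0 (consensual initialization) and ‖h_t‖ ≤ G for all t, where ‖·‖ is the Euclidean norm. Then for every t ≥ 0, ‖k_t − J k_t‖² ≤ 2ρ(1+ρ)·G² / (1−ρ)². -/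
/-!
Since `JW = WJ = J² = J`, the consensus error `e t = k t - J k t` obeys
`e (t+1) = (W - J)(e t + h t)`, so with `σ = ‖W - J‖ = √ρ` we get
`‖e (t+1)‖ ≤ σ (‖e t‖ + G)`. Starting from `e 0 = 0`, the fixed point `σG/(1-σ)` of this
affine recursion bounds `‖e t‖` forever, and
`(σG/(1-σ))² = σ²(1+σ)²G²/(1-σ²)² ≤ 2σ²(1+σ²)G²/(1-σ²)²`.
-/

section AveragingMatrix

variable {R : Type*} [Field R] {n : ℕ}

theorem Matrix.averaging_mul_of_sum_col_eq_one {W : Matrix (Fin n) (Fin n) R}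
    (hWcol : ∀ j, ∑ i, W i j = 1) :
    (Matrix.of fun _ _ => (n : R)⁻¹) * W = Matrix.of fun _ _ => (n : R)⁻¹ := by
  ext i j
  simp only [Matrix.mul_apply, Matrix.of_apply]
  rw [← Finset.mul_sum, hWcol j, mul_one]

theorem Matrix.mul_averaging_of_sum_row_eq_one {W : Matrix (Fin n) (Fin n) R}
    (hWrow : ∀ i, ∑ j, W i j = 1) :
    W * (Matrix.of fun _ _ => (n : R)⁻¹) = Matrix.of fun _ _ => (n : R)⁻¹ := by
  ext i j
  simp only [Matrix.mul_apply, Matrix.of_apply]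
  rw [← Finset.sum_mul, hWrow i, one_mul]

theorem Matrix.averaging_mul_self [CharZero R] :
    (Matrix.of fun _ _ => (n : R)⁻¹) * (Matrix.of fun _ _ => (n : R)⁻¹ :
      Matrix (Fin n) (Fin n) R) = Matrix.of fun _ _ => (n : R)⁻¹ := by
  ext i j
  have hn : (n : R) ≠ 0 := Nat.cast_ne_zero.mpr i.pos.ne'
  simp only [Matrix.mul_apply, Matrix.of_apply, Finset.sum_const, Finset.card_univ,
    Fintype.card_fin, nsmul_eq_mul]
  field_simp

end AveragingMatrix

theorem norm_sub_apply_map_add_le {𝕜 E : Type*} [NontriviallyNormedField 𝕜]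
    [NormedAddCommGroup E] [NormedSpace 𝕜 E] {W J : E →L[𝕜] E}
    (hJW : J * W = J) (hWJ : W * J = J) (hJJ : J * J = J) (x h : E) :
    ‖W (x + h) - J (W (x + h))‖ ≤ ‖W - J‖ * (‖x - J x‖ + ‖h‖) := by
  have hJW' : J (W (x + h)) = J (x + h) := by rw [← mul_apply_eq_comp, hJW]
  have hWJ' : W (J x) = J x := by rw [← mul_apply_eq_comp, hWJ]
  have hJJ' : J (J x) = J x := by rw [← mul_apply_eq_comp, hJJ]
  have herror : W (x + h) - J (W (x + h)) = (W - J) (x - J x + h) := by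
    rw [hJW']
    simp only [sub_apply, map_add, map_sub, hWJ', hJJ']
    abel
  calc ‖W (x + h) - J (W (x + h))‖ = ‖(W - J) (x - J x + h)‖ := by rw [herror]
    _ ≤ ‖W - J‖ * ‖x - J x + h‖ := (W - J).le_opNorm _
    _ ≤ ‖W - J‖ * (‖x - J x‖ + ‖h‖) := by gcongr; exact norm_add_le _ _

theorem le_mul_div_one_sub_of_le_mul_add {a : ℕ → ℝ} {σ G : ℝ} (hσ0 : 0 ≤ σ) (hσ1 : σ < 1)
    (h0 : a 0 ≤ σ * G / (1 - σ)) (hstep : ∀ t, a (t + 1) ≤ σ * (a t + G)) :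
    ∀ t, a t ≤ σ * G / (1 - σ) := by
  have hfix : σ * (σ * G / (1 - σ) + G) = σ * G / (1 - σ) := by
    field_simp [(sub_pos.mpr hσ1).ne']
    ring
  intro t
  induction t with
  | zero => exact h0
  | succ t ih =>
    calc a (t + 1) ≤ σ * (a t + G) := hstep t
      _ ≤ σ * (σ * G / (1 - σ) + G) := by gcongr
      _ = σ * G / (1 - σ) := hfix

theorem sq_le_of_le_mul_div_one_sub {a σ G : ℝ} (ha : 0 ≤ a) (hσ0 : 0 ≤ σ) (hσ1 : σ < 1)
    (hle : a ≤ σ * G / (1 - σ)) :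
    a ^ 2 ≤ 2 * σ ^ 2 * (1 + σ ^ 2) * G ^ 2 / (1 - σ ^ 2) ^ 2 := by
  have hpos : 0 < 1 - σ := sub_pos.mpr hσ1
  have hfactor : (σ * G / (1 - σ)) ^ 2 = σ ^ 2 * G ^ 2 * (1 + σ) ^ 2 / (1 - σ ^ 2) ^ 2 := by
    field_simp [hpos.ne', (by nlinarith : (1 : ℝ) - σ ^ 2 ≠ 0)]
    ring
  calc a ^ 2 ≤ (σ * G / (1 - σ)) ^ 2 := pow_le_pow_left₀ ha hle 2
    _ = σ ^ 2 * G ^ 2 * (1 + σ) ^ 2 / (1 - σ ^ 2) ^ 2 := hfactor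
    _ ≤ 2 * σ ^ 2 * (1 + σ ^ 2) * G ^ 2 / (1 - σ ^ 2) ^ 2 := by
      gcongr ?_ / _
      nlinarith [mul_nonneg (mul_nonneg (sq_nonneg σ) (sq_nonneg G)) (sq_nonneg (1 - σ))]

/-- **Abstract stepsize-tracking consistency bound** (eqs. 115–117): for a doubly stochastic
mixing matrix `W` with `ρ = ‖W − J‖₂² < 1`, a tracking recursion `k (t+1) = W (k t + h t)`
with consensual initialization and uniformly bounded increments `‖h t‖ ≤ G` keeps the
consensus error of the accumulators uniformly bounded:
`‖k t − J k t‖² ≤ 2ρ(1+ρ)G²/(1−ρ)²` for all `t`. -/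
theorem tracking_consensus_error_bound
    {n : ℕ}
    (W : Matrix (Fin n) (Fin n) ℝ)
    (hWrow : ∀ i, ∑ j, W i j = 1)
    (hWcol : ∀ j, ∑ i, W i j = 1)
    (J : Matrix (Fin n) (Fin n) ℝ) (hJ : J = Matrix.of fun _ _ => (n : ℝ)⁻¹)
    (ρ : ℝ) (hρdef : ρ = ‖Matrix.toEuclideanCLM (𝕜 := ℝ) (W - J)‖ ^ 2)
    (hρ : ρ < 1)
    (k h : ℕ → EuclideanSpace ℝ (Fin n))
    (hrec : ∀ t, k (t + 1) = Matrix.toEuclideanCLM (𝕜 := ℝ) W (k t + h t))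
    (hk0 : k 0 = Matrix.toEuclideanCLM (𝕜 := ℝ) J (k 0))
    (G : ℝ) (hG : ∀ t, ‖h t‖ ≤ G) :
    ∀ t, ‖k t - Matrix.toEuclideanCLM (𝕜 := ℝ) J (k t)‖ ^ 2 ≤
      2 * ρ * (1 + ρ) * G ^ 2 / (1 - ρ) ^ 2 := by
  set T := Matrix.toEuclideanCLM (𝕜 := ℝ) (n := Fin n)
  set σ := ‖T W - T J‖
  rw [map_sub] at hρdef
  have hσ0 : 0 ≤ σ := norm_nonneg _
  have hσ1 : σ < 1 := by nlinarith
  have hG0 : 0 ≤ G := (norm_nonneg _).trans (hG 0)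
  subst hρdef
  have hlinear : ∀ t, ‖k t - T J (k t)‖ ≤ σ * G / (1 - σ) := by
    refine le_mul_div_one_sub_of_le_mul_add hσ0 hσ1 ?_ fun t => ?_
    · rw [← hk0, sub_self, norm_zero]
      exact div_nonneg (mul_nonneg hσ0 hG0) (sub_pos.mpr hσ1).le
    · rw [hrec t]
      refine (norm_sub_apply_map_add_le ?_ ?_ ?_ (k t) (h t)).trans ?_
      · rw [← map_mul, hJ, Matrix.averaging_mul_of_sum_col_eq_one hWcol]
      · rw [← map_mul, hJ, Matrix.mul_averaging_of_sum_row_eq_one hWrow]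
      · rw [← map_mul, hJ, Matrix.averaging_mul_self]
      · gcongr
        exact hG t
  exact fun t => sq_le_of_le_mul_div_one_sub (norm_nonneg _) hσ0 hσ1 (hlinear t)
end
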